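/- Let ℓ ≥ 2, ρ ∈ (−1/(ℓ−1), 0], and d ∈ (0,1). Define θ = 0 if d ∈ (0, 1+(ℓ−1)ρ) and θ = (1−d)/(ℓ−1) + ρ if d ∈ [1+(ℓ−1)ρ, 1), and let D* be the ℓ×ℓ real matrix with diagonal entries d and off-diagonal entries θ. Then D* is positive definite, Σ^{(ℓ)} − D* is positive semidefinite, tr(D*) = ℓd, and for every real symmetric ℓ×ℓ matrix D with 0 ≺ D ⪯ Σ^{(ℓ)} and tr(D) ≤ ℓd one has det(D) ≤ det(D*), with equality only if D = D*. -/

import Mathlib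

/-!
Write `D* = (d - θ) I + θ J` with `J` the all-ones matrix. Its inverse is `M = α I + β J` with
`α = (d - θ)⁻¹ > 0` and `β ≥ 0` (a positive multiple of `-θ`). For a feasible `D`, the constraints
`tr D ≤ ℓ d` and `𝟙ᵀ D 𝟙 ≤ 𝟙ᵀ Σ 𝟙` (from `Σ - D ⪰ 0`) give
`tr (M D) = α tr D + β 𝟙ᵀ D 𝟙 ≤ α ℓ d + β 𝟙ᵀ Σ 𝟙 = tr (M D*) = ℓ`,
the middle equality being complementary slackness: `θ = 0` unless `𝟙ᵀ D* 𝟙 = 𝟙ᵀ Σ 𝟙`.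
Then AM-GM on the eigenvalues of `M^{1/2} D M^{1/2}` gives `det (M D) ≤ 1`, with equality only when
`M D = 1`.
-/

open Matrix Finset
open scoped MatrixOrder

theorem Real.prod_le_one_of_sum_le_card {ι : Type*} [Fintype ι] {μ : ι → ℝ}
    (hμ : ∀ i, 0 < μ i) (hsum : ∑ i, μ i ≤ Fintype.card ι) :
    ∏ i, μ i ≤ 1 ∧ (∏ i, μ i = 1 → ∀ i, μ i = 1) := by
  have hlog : Real.log (∏ i, μ i) = ∑ i, Real.log (μ i) :=
    Real.log_prod fun i _ => (hμ i).ne'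
  have hsum' : ∑ i, (μ i - 1) ≤ 0 := by
    simpa [sum_sub_distrib] using hsum
  refine ⟨?_, fun hprod i => by_contra fun hi => ?_⟩
  · rw [← Real.log_nonpos_iff (prod_pos fun i _ => hμ i).le, hlog]
    exact (sum_le_sum fun i _ => Real.log_le_sub_one_of_pos (hμ i)).trans hsum'
  · have : ∑ i, Real.log (μ i) < ∑ i, (μ i - 1) :=
      sum_lt_sum (fun j _ => Real.log_le_sub_one_of_pos (hμ j))
        ⟨i, mem_univ i, Real.log_lt_sub_one_of_pos (hμ i) hi⟩
    rw [← hlog, hprod, Real.log_one] at this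
    linarith

namespace Matrix

variable {ι : Type*}

section PosDef

variable [Fintype ι] [DecidableEq ι]

theorem PosDef.det_le_one_of_trace_le_card {C : Matrix ι ι ℝ} (hC : C.PosDef)
    (htr : C.trace ≤ Fintype.card ι) : C.det ≤ 1 ∧ (C.det = 1 → C = 1) := by
  have hdet : C.det = ∏ i, hC.1.eigenvalues i := by simpa using hC.1.det_eq_prod_eigenvalues
  have htr' : C.trace = ∑ i, hC.1.eigenvalues i := by
    simpa using hC.1.trace_eq_sum_eigenvalues
  obtain ⟨hle, heq⟩ := Real.prod_le_one_of_sum_le_card hC.eigenvalues_pos (htr' ▸ htr)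
  refine ⟨hdet ▸ hle, fun h1 => ?_⟩
  have hdiag : diagonal (RCLike.ofReal ∘ hC.1.eigenvalues) = (1 : Matrix ι ι ℝ) := by
    ext i j
    simp [diagonal_apply, one_apply, heq (hdet ▸ h1)]
  rw [hC.1.spectral_theorem, hdiag, map_one]

theorem PosDef.det_mul_le_one_of_trace_mul_le_card {A B : Matrix ι ι ℝ} (hA : A.PosDef)
    (hB : B.PosDef) (htr : (A * B).trace ≤ Fintype.card ι) :
    A.det * B.det ≤ 1 ∧ (A.det * B.det = 1 → A * B = 1) := by
  set R := CFC.sqrt A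
  have hRR : R * R = A := CFC.sqrt_mul_sqrt_self A hA.posSemidef.nonneg
  have hRstar : star R = R := (CFC.sqrt_nonneg A).posSemidef.1
  have hRdet : IsUnit R.det := by
    rw [isUnit_iff_ne_zero]
    intro h
    simpa [← hRR, h] using hA.det_pos
  have hR : IsUnit R := (isUnit_iff_isUnit_det R).2 hRdet
  have hC : (R * B * R).PosDef := by
    simpa [hRstar] using (IsUnit.posDef_star_left_conjugate_iff hR).2 hB
  have htrC : (R * B * R).trace = (A * B).trace := by
    rw [trace_mul_comm, ← Matrix.mul_assoc, hRR]
  have hdetC : (R * B * R).det = A.det * B.det := by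
    rw [← hRR, det_mul, det_mul, det_mul]; ring
  obtain ⟨hle, heq⟩ := hC.det_le_one_of_trace_le_card (htrC ▸ htr)
  refine ⟨hdetC ▸ hle, fun h1 => ?_⟩
  have hRBR : R * B * R = 1 := heq (hdetC ▸ h1)
  calc A * B = R * (R * B * R) * R⁻¹ := by
        rw [← hRR]; simp [Matrix.mul_assoc, mul_nonsing_inv _ hRdet]
    _ = 1 := by rw [hRBR, Matrix.mul_one, mul_nonsing_inv _ hRdet]

theorem det_le_det_of_trace_mul_le_card {M D E : Matrix ι ι ℝ} (hM : M.PosDef)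
    (hME : M * E = 1) (hD : D.PosDef) (htr : (M * D).trace ≤ Fintype.card ι) :
    D.det ≤ E.det ∧ (D.det = E.det → D = E) := by
  have hdet : M.det * E.det = 1 := by rw [← det_mul, hME, det_one]
  have hEM : E * M = 1 := mul_eq_one_comm.1 hME
  obtain ⟨hle, heq⟩ := hM.det_mul_le_one_of_trace_mul_le_card hD htr
  refine ⟨le_of_mul_le_mul_left (hdet ▸ hle) hM.det_pos, fun h => ?_⟩
  calc D = E * (M * D) := by rw [← Matrix.mul_assoc, hEM, Matrix.one_mul]
    _ = E := by rw [heq (h ▸ hdet), Matrix.mul_one]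

end PosDef

def allOnes (ι : Type*) : Matrix ι ι ℝ := of fun _ _ => 1

@[simp]
theorem allOnes_apply (i j : ι) : allOnes ι i j = 1 := rfl

def compoundSymm (ι : Type*) [DecidableEq ι] (a b : ℝ) : Matrix ι ι ℝ := a • 1 + b • allOnes ι

section DecidableEq

variable [DecidableEq ι]

theorem compoundSymm_apply (a b : ℝ) (i j : ι) :
    compoundSymm ι a b i j = (if i = j then a else 0) + b := by
  simp [compoundSymm, one_apply]

theorem of_ite_eq_compoundSymm (p q : ℝ) :
    (of fun i j : ι => if i = j then p else q) = compoundSymm ι (p - q) q := by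
  ext i j
  by_cases h : i = j <;> simp [compoundSymm_apply, h]

theorem compoundSymm_isHermitian (a b : ℝ) : (compoundSymm ι a b).IsHermitian := by
  ext i j
  simp [compoundSymm_apply, eq_comm]

theorem compoundSymm_sub_compoundSymm (a b c e : ℝ) :
    compoundSymm ι a b - compoundSymm ι c e = compoundSymm ι (a - c) (b - e) := by
  simp only [compoundSymm]
  module

end DecidableEq

variable [Fintype ι]

theorem allOnes_mulVec (x : ι → ℝ) : allOnes ι *ᵥ x = fun _ => ∑ i, x i := by
  ext; simp [mulVec, dotProduct]

theorem allOnes_mul_allOnes : allOnes ι * allOnes ι = (Fintype.card ι : ℝ) • allOnes ι := by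
  ext; simp [mul_apply]

theorem trace_allOnes_mul (D : Matrix ι ι ℝ) : (allOnes ι * D).trace = ∑ i, ∑ j, D i j := by
  simp [trace, mul_apply, sum_comm (γ := ι)]

theorem PosSemidef.sum_sum_nonneg {A : Matrix ι ι ℝ} (hA : A.PosSemidef) :
    0 ≤ ∑ i, ∑ j, A i j := by
  simpa [dotProduct, mulVec, mul_sum] using hA.dotProduct_mulVec_nonneg (fun _ => 1)

variable [DecidableEq ι]

theorem dotProduct_compoundSymm_mulVec (a b : ℝ) (x : ι → ℝ) :
    x ⬝ᵥ (compoundSymm ι a b *ᵥ x) = a * ∑ i, x i ^ 2 + b * (∑ i, x i) ^ 2 := by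
  simp only [compoundSymm, add_mulVec, smul_mulVec, one_mulVec, allOnes_mulVec, dotProduct_add,
    dotProduct_smul]
  simp only [dotProduct, smul_eq_mul, ← sum_mul, sq]

theorem compoundSymm_posSemidef {a b : ℝ} (ha : 0 ≤ a) (hab : 0 ≤ a + Fintype.card ι * b) :
    (compoundSymm ι a b).PosSemidef := by
  refine .of_dotProduct_mulVec_nonneg (compoundSymm_isHermitian a b) fun x => ?_
  have hCS : (∑ i, x i) ^ 2 ≤ Fintype.card ι * ∑ i, x i ^ 2 := sq_sum_le_card_mul_sum_sq
  rw [star_trivial, dotProduct_compoundSymm_mulVec]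
  rcases le_or_gt 0 b with hb | hb
  · positivity
  · nlinarith [sum_nonneg fun i (_ : i ∈ univ) => sq_nonneg (x i)]

theorem compoundSymm_posDef {a b : ℝ} (ha : 0 < a) (hab : 0 < a + Fintype.card ι * b) :
    (compoundSymm ι a b).PosDef := by
  refine .of_dotProduct_mulVec_pos (compoundSymm_isHermitian a b) fun x hx => ?_
  have hCS : (∑ i, x i) ^ 2 ≤ Fintype.card ι * ∑ i, x i ^ 2 := sq_sum_le_card_mul_sum_sq
  have hx : 0 < ∑ i, x i ^ 2 := by
    obtain ⟨i, hi⟩ := Function.ne_iff.1 hx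
    exact sum_pos' (fun j _ => sq_nonneg (x j)) ⟨i, mem_univ i, sq_pos_of_ne_zero hi⟩
  rw [star_trivial, dotProduct_compoundSymm_mulVec]
  rcases le_or_gt 0 b with hb | hb
  · positivity
  · nlinarith

theorem compoundSymm_mul_compoundSymm (a b c e : ℝ) :
    compoundSymm ι a b * compoundSymm ι c e =
      compoundSymm ι (a * c) (a * e + b * c + Fintype.card ι * b * e) := by
  simp only [compoundSymm, add_mul, mul_add, Matrix.smul_mul, Matrix.mul_smul, Matrix.one_mul,
    Matrix.mul_one, allOnes_mul_allOnes]
  module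

theorem compoundSymm_inv_mul_compoundSymm {a b : ℝ} (ha : a ≠ 0)
    (hab : a + Fintype.card ι * b ≠ 0) :
    compoundSymm ι a⁻¹ (-b / (a * (a + Fintype.card ι * b))) * compoundSymm ι a b = 1 := by
  have hoff : a⁻¹ * b + -b / (a * (a + Fintype.card ι * b)) * a +
      Fintype.card ι * (-b / (a * (a + Fintype.card ι * b))) * b = 0 := by
    generalize (Fintype.card ι : ℝ) = n at *
    rw [show a⁻¹ = (a + n * b) / (a * (a + n * b)) by field_simp]
    field_simp
    ring
  rw [compoundSymm_mul_compoundSymm, inv_mul_cancel₀ ha, hoff]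
  simp [compoundSymm]

theorem trace_compoundSymm (a b : ℝ) :
    (compoundSymm ι a b).trace = Fintype.card ι * (a + b) := by
  simp [trace, compoundSymm_apply, mul_add]

theorem sum_sum_compoundSymm (a b : ℝ) :
    ∑ i, ∑ j, compoundSymm ι a b i j = Fintype.card ι * (a + Fintype.card ι * b) := by
  simp [compoundSymm_apply, sum_add_distrib, mul_add]

theorem trace_compoundSymm_mul (a b : ℝ) (D : Matrix ι ι ℝ) :
    (compoundSymm ι a b * D).trace = a * D.trace + b * ∑ i, ∑ j, D i j := by
  simp [compoundSymm, add_mul, trace_allOnes_mul]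

/-- Weak duality for `max log det D` subject to `tr D ≤ t`, `D ⪯ S`, with dual point `a I + b J`. -/
theorem trace_compoundSymm_mul_le {a b t : ℝ} (ha : 0 ≤ a) (hb : 0 ≤ b) {D S : Matrix ι ι ℝ}
    (htr : D.trace ≤ t) (hSD : (S - D).PosSemidef) :
    (compoundSymm ι a b * D).trace ≤ a * t + b * ∑ i, ∑ j, S i j := by
  have hsum : ∑ i, ∑ j, D i j ≤ ∑ i, ∑ j, S i j := by
    simpa [sum_sub_distrib] using hSD.sum_sum_nonneg
  rw [trace_compoundSymm_mul]
  gcongr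

end Matrix

/-- The eigenvalue conditions for `D* ≻ 0` and `Σ - D* ⪰ 0`, and complementary slackness for the
constraint `𝟙ᵀ D 𝟙 ≤ 𝟙ᵀ Σ 𝟙`. -/
theorem offDiag_optimal_spec {n ρ d θ : ℝ} (hn : 1 < n) (hρ₁ : -(1 / (n - 1)) < ρ)
    (hρ₂ : ρ ≤ 0) (hd₁ : 0 < d) (hd₂ : d < 1)
    (hθ : θ = if d < 1 + (n - 1) * ρ then 0 else (1 - d) / (n - 1) + ρ) :
    ρ ≤ θ ∧ θ ≤ 0 ∧ 0 < d + (n - 1) * θ ∧ d + (n - 1) * θ ≤ 1 + (n - 1) * ρ ∧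
      (θ = 0 ∨ d + (n - 1) * θ = 1 + (n - 1) * ρ) := by
  have hn₁ : 0 < n - 1 := by linarith
  have hρ : 0 < 1 + (n - 1) * ρ := by
    rw [neg_lt, lt_div_iff₀ hn₁] at hρ₁
    linarith
  split_ifs at hθ with h
  · subst hθ
    refine ⟨hρ₂, le_rfl, by linarith, by linarith, .inl rfl⟩
  · have he : d + (n - 1) * θ = 1 + (n - 1) * ρ := by
      rw [hθ]; field_simp; ring
    have hdiff : 0 ≤ (1 - d) / (n - 1) := div_nonneg (by linarith) hn₁.le
    refine ⟨by linarith, ?_, by linarith, he.le, .inr he⟩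
    nlinarith

/-- for ρ ∈ (-1/(ℓ-1), 0], the matrix `D*` with diagonal entries `d` and
off-diagonal entries `θ` (with `θ = 0` for `d < 1+(ℓ-1)ρ` and `θ = (1-d)/(ℓ-1)+ρ` otherwise)
is the unique optimal solution of the convex program defining the centralized Gaussian
rate-distortion function. -/
theorem stmt_6 (ℓ : ℕ) (hℓ : 2 ≤ ℓ) (ρ d : ℝ)
    (hρ₁ : -(1 / ((ℓ : ℝ) - 1)) < ρ) (hρ₂ : ρ ≤ 0) (hd₁ : 0 < d) (hd₂ : d < 1)
    (θ : ℝ)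
    (hθ : θ = if d < 1 + ((ℓ : ℝ) - 1) * ρ then 0 else (1 - d) / ((ℓ : ℝ) - 1) + ρ)
    (S Dstar : Matrix (Fin ℓ) (Fin ℓ) ℝ)
    (hS : S = Matrix.of fun i j => if i = j then (1 : ℝ) else ρ)
    (hDstar : Dstar = Matrix.of fun i j => if i = j then d else θ) :
    Dstar.PosDef ∧ (S - Dstar).PosSemidef ∧ Dstar.trace = (ℓ : ℝ) * d ∧
    ∀ D : Matrix (Fin ℓ) (Fin ℓ) ℝ, D.IsSymm → D.PosDef → (S - D).PosSemidef →
      D.trace ≤ (ℓ : ℝ) * d → (D.det ≤ Dstar.det ∧ (D.det = Dstar.det → D = Dstar)) := by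
  obtain ⟨hρθ, hθ₀, he, heS, hslack⟩ :=
    offDiag_optimal_spec (by exact_mod_cast hℓ) hρ₁ hρ₂ hd₁ hd₂ hθ
  rw [of_ite_eq_compoundSymm] at hS hDstar
  subst hS hDstar
  have hcard : (Fintype.card (Fin ℓ) : ℝ) = ℓ := by simp
  have hDpos : (compoundSymm (Fin ℓ) (d - θ) θ).PosDef :=
    compoundSymm_posDef (by linarith) (by rw [hcard]; linarith)
  have htrace : (compoundSymm (Fin ℓ) (d - θ) θ).trace = ℓ * d := by
    rw [trace_compoundSymm, hcard]; ring
  have hMD := compoundSymm_inv_mul_compoundSymm (ι := Fin ℓ) (a := d - θ) (b := θ) (by linarith)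
    (by rw [hcard]; linarith)
  set β := -θ / ((d - θ) * (d - θ + Fintype.card (Fin ℓ) * θ))
  have hβ : 0 ≤ β :=
    div_nonneg (by linarith) (mul_pos (by linarith) (by rw [hcard]; linarith)).le
  have hM : (compoundSymm (Fin ℓ) (d - θ)⁻¹ β).PosDef := inv_eq_left_inv hMD ▸ hDpos.inv
  have hβsum : β * ∑ i, ∑ j, compoundSymm (Fin ℓ) (1 - ρ) ρ i j =
      β * ∑ i, ∑ j, compoundSymm (Fin ℓ) (d - θ) θ i j := by
    rcases hslack with h | h
    · simp [β, h]
    · rw [sum_sum_compoundSymm, sum_sum_compoundSymm, hcard]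
      linear_combination -(β * ℓ) * h
  refine ⟨hDpos, ?_, htrace, fun D _ hD hSD htr => det_le_det_of_trace_mul_le_card hM hMD hD ?_⟩
  · rw [compoundSymm_sub_compoundSymm]
    exact compoundSymm_posSemidef (by linarith) (by rw [hcard]; linarith)
  · calc (compoundSymm (Fin ℓ) (d - θ)⁻¹ β * D).trace
        ≤ (d - θ)⁻¹ * (ℓ * d) + β * ∑ i, ∑ j, compoundSymm (Fin ℓ) (1 - ρ) ρ i j :=
          trace_compoundSymm_mul_le (inv_nonneg.2 (by linarith)) hβ htr hSD
      _ = (compoundSymm (Fin ℓ) (d - θ)⁻¹ β * compoundSymm (Fin ℓ) (d - θ) θ).trace := by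
          rw [trace_compoundSymm_mul, htrace, hβsum]
      _ = Fintype.card (Fin ℓ) := by rw [hMD, trace_one]
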